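/- There exists a set A and a ternary associative operation [·,·,·] : A³ → A such that no associative binary operation ⊗ on A satisfies [x,y,z] = (x ⊗ y) ⊗ z for all x, y, z in A. -/
import Mathlib

theorem exists_nonreducible_ternary_assoc :
    ∃ (A : Type) (f : A → A → A → A),
      (∀ x y z u v : A,
        f (f x y z) u v = f x (f y z u) v ∧ f (f x y z) u v = f x y (f z u v)) ∧
      ¬ ∃ op : A → A → A,
          (∀ a b c : A, op (op a b) c = op a (op b c)) ∧
          (∀ x y z : A, f x y z = op (op x y) z) := by
  refine ⟨Bool, fun x y z => !(xor x (xor y z)), ?_, ?_⟩ <;> decide
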